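/- arXiv:2108.08603 — 4 statements merged into one kernel-verified Lean document; each statement's English description precedes it below -/
import Mathlib

section
/- For a finite set of propositional formulas Γ over signature Σ and a subsignature P ⊆ Σ, the models over Σ\P of the Delgrande forgetting F(Γ,P) = Cn_Σ(Γ) ∩ L_{Σ\P} are exactly the reduction to Σ\P of the models of Γ over Σ. -/
/-- Propositional formulas over atoms `ℕ`. -/
inductive Fm where
  | var : ℕ → Fm
  | top : Fm
  | bot : Fm
  | neg : Fm → Fm
  | conj : Fm → Fm → Fm
  | disj : Fm → Fm → Fm

/-- Evaluation of a formula under a total valuation. -/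
def Fm.eval (v : ℕ → Bool) : Fm → Bool
  | var n => v n
  | top => true
  | bot => false
  | neg φ => !(φ.eval v)
  | conj φ ψ => φ.eval v && ψ.eval v
  | disj φ ψ => φ.eval v || ψ.eval v

/-- The atoms mentioned in a formula. -/
def Fm.atoms : Fm → Set ℕ
  | var n => {n}
  | top => ∅
  | bot => ∅
  | neg φ => φ.atoms
  | conj φ ψ => φ.atoms ∪ ψ.atoms
  | disj φ ψ => φ.atoms ∪ ψ.atoms

/-- The language `L_S` over signature `S`: formulas mentioning only atoms in `S`. -/
def Lang (S : Set ℕ) : Set Fm := {φ | φ.atoms ⊆ S}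

/-- Interpretations `Ω_S` over signature `S`. -/
def Itp (S : Set ℕ) := ↥S → Bool

open Classical in
/-- Extend an interpretation over `S` to a total valuation (false outside `S`). -/
noncomputable def Itp.toVal {S : Set ℕ} (ω : Itp S) : ℕ → Bool :=
  fun n => if h : n ∈ S then ω ⟨n, h⟩ else false

/-- Satisfaction of a formula by an interpretation over `S`. -/
def Itp.sat {S : Set ℕ} (ω : Itp S) (φ : Fm) : Prop := φ.eval ω.toVal = true

/-- Restriction of an interpretation over `S` to a subsignature `S'`. -/
def Itp.restrict {S' S : Set ℕ} (h : S' ⊆ S) (ω : Itp S) : Itp S' :=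
  fun n => ω ⟨n.1, h n.2⟩

/-- Models over `S` of a set of formulas. -/
def Models (S : Set ℕ) (Γ : Set Fm) : Set (Itp S) := {ω | ∀ φ ∈ Γ, ω.sat φ}

/-- Semantic entailment over `S` between sets of formulas. -/
def Entails (S : Set ℕ) (Γ Δ : Set Fm) : Prop := Models S Γ ⊆ Models S Δ

/-- Consequence operator `Cn_S`. -/
def Cn (S : Set ℕ) (Γ : Set Fm) : Set Fm :=
  {φ | φ ∈ Lang S ∧ ∀ ω ∈ Models S Γ, ω.sat φ}

/-- Delgrande forgetting `F(Γ,P) = Cn_S(Γ) ∩ L_{S\P}`. -/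
def Forget (S : Set ℕ) (Γ : Set Fm) (P : Set ℕ) : Set Fm :=
  Cn S Γ ∩ Lang (S \ P)

/-- Reduction of a set of models to a subsignature. -/
def reduce {S' S : Set ℕ} (h : S' ⊆ S) (M : Set (Itp S)) : Set (Itp S') :=
  {ω' | ∃ ω ∈ M, ω.restrict h = ω'}

/-- Expansion of a set of models to a supersignature. -/
def expand {S' S : Set ℕ} (h : S' ⊆ S) (M' : Set (Itp S')) : Set (Itp S) :=
  {ω | ω.restrict h ∈ M'}

/-- An OCF over `S` is a ranking function attaining rank 0. -/
def IsOCF {S : Set ℕ} (κ : Itp S → ℕ) : Prop := ∃ ω, κ ω = 0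

/-- The models (rank-0 interpretations) of an OCF. -/
def OCFMod {S : Set ℕ} (κ : Itp S → ℕ) : Set (Itp S) := {ω | κ ω = 0}

/-- The belief set of an OCF over `S`. -/
def Bel (S : Set ℕ) (κ : Itp S → ℕ) : Set Fm :=
  {φ | φ ∈ Lang S ∧ ∀ ω ∈ OCFMod κ, ω.sat φ}

/-- Marginalisation of an OCF to a subsignature. -/
noncomputable def marg {S' S : Set ℕ} (h : S' ⊆ S) (κ : Itp S → ℕ) : Itp S' → ℕ :=
  fun ω' => sInf {n | ∃ ω : Itp S, ω.restrict h = ω' ∧ κ ω = n}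

/-- Lifting of an OCF over `S'` to a supersignature `S`. -/
def lift {S' S : Set ℕ} (h : S' ⊆ S) (κ' : Itp S' → ℕ) : Itp S → ℕ :=
  fun ω => κ' (ω.restrict h)

/-- Substitution of the atom `ρ` by formula `χ`. -/
def Fm.subst (ρ : ℕ) (χ : Fm) : Fm → Fm
  | var n => if n = ρ then χ else var n
  | top => top
  | bot => bot
  | neg φ => neg (subst ρ χ φ)
  | conj φ ψ => conj (subst ρ χ φ) (subst ρ χ ψ)
  | disj φ ψ => disj (subst ρ χ φ) (subst ρ χ ψ)

/-- Boole's atom forgetting: `forget(φ,ρ) = φ[ρ/⊤] ∨ φ[ρ/⊥]`. -/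
def boole (φ : Fm) (ρ : ℕ) : Fm := .disj (φ.subst ρ .top) (φ.subst ρ .bot)

/-! Over a finite signature an interpretation `ω'` is pinned down by the conjunction `χ` of its
literals. If `ω'` over `S \ P` is not the restriction of any model of `Γ`, then `¬χ` is a consequence
of `Γ` lying in `L_{S \ P}`, so `ω'` is not a model of `F(Γ, P)`. Conversely, a formula of
`L_{S \ P}` has the same truth value in an interpretation and in its restriction to `S \ P`. -/

namespace Fm

theorem eval_congr (φ : Fm) {v w : ℕ → Bool} (h : ∀ n ∈ φ.atoms, v n = w n) :
    φ.eval v = φ.eval w := by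
  induction φ with
  | var n => exact h n rfl
  | top | bot => rfl
  | neg φ ih => simp only [eval, ih h]
  | conj φ ψ ihφ ihψ =>
    simp only [eval, ihφ fun n hn => h n (Or.inl hn), ihψ fun n hn => h n (Or.inr hn)]
  | disj φ ψ ihφ ihψ =>
    simp only [eval, ihφ fun n hn => h n (Or.inl hn), ihψ fun n hn => h n (Or.inr hn)]

def lit (a : ℕ) (b : Bool) : Fm := if b then var a else neg (var a)

theorem atoms_lit (a : ℕ) (b : Bool) : (lit a b).atoms = {a} := by
  cases b <;> rfl

theorem eval_lit (a : ℕ) (b : Bool) (w : ℕ → Bool) : (lit a b).eval w = true ↔ w a = b := by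
  cases b <;> simp [lit, eval]

def charFm (l : List ℕ) (v : ℕ → Bool) : Fm :=
  l.foldr (fun a ψ => conj (lit a (v a)) ψ) top

theorem atoms_charFm (l : List ℕ) (v : ℕ → Bool) : (charFm l v).atoms ⊆ {n | n ∈ l} := by
  induction l with
  | nil => simp [charFm, atoms]
  | cons a l ih =>
    rintro n (hn | hn)
    · rw [atoms_lit] at hn
      exact List.mem_cons.mpr (Or.inl hn)
    · exact List.mem_cons_of_mem a (ih hn)

theorem eval_charFm (l : List ℕ) (v w : ℕ → Bool) :
    (charFm l v).eval w = true ↔ ∀ a ∈ l, w a = v a := by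
  induction l with
  | nil => simp [charFm, eval]
  | cons a l ih =>
    simp only [charFm, List.foldr, eval, Bool.and_eq_true, List.mem_cons, forall_eq_or_imp,
      eval_lit] at ih ⊢
    rw [ih]

end Fm

namespace Itp

variable {S' S : Set ℕ}

theorem sat_neg (ω : Itp S) (φ : Fm) : ω.sat (.neg φ) ↔ ¬ ω.sat φ := by
  simp [sat, Fm.eval]

theorem toVal_of_mem (ω : Itp S) {n : ℕ} (hn : n ∈ S) : ω.toVal n = ω ⟨n, hn⟩ := by
  simp [toVal, hn]

theorem eq_iff_toVal (ω₁ ω₂ : Itp S) : ω₁ = ω₂ ↔ ∀ n ∈ S, ω₁.toVal n = ω₂.toVal n := by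
  refine ⟨fun h _ _ => h ▸ rfl, fun h => funext fun n => ?_⟩
  simpa only [toVal_of_mem _ n.2] using h n n.2

theorem toVal_restrict (h : S' ⊆ S) (ω : Itp S) {n : ℕ} (hn : n ∈ S') :
    (ω.restrict h).toVal n = ω.toVal n := by
  rw [toVal_of_mem _ hn, toVal_of_mem _ (h hn)]
  rfl

theorem sat_restrict (h : S' ⊆ S) (ω : Itp S) {φ : Fm} (hφ : φ ∈ Lang S') :
    (ω.restrict h).sat φ ↔ ω.sat φ := by
  rw [sat, sat, φ.eval_congr fun n hn => toVal_restrict h ω (hφ hn)]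

theorem exists_sat_iff_eq (hS : S.Finite) (ω' : Itp S) :
    ∃ χ ∈ Lang S, ∀ ω : Itp S, ω.sat χ ↔ ω = ω' := by
  refine ⟨Fm.charFm hS.toFinset.toList ω'.toVal, fun n hn => ?_, fun ω => ?_⟩
  · simpa using Fm.atoms_charFm _ _ hn
  · simp [sat, Fm.eval_charFm, eq_iff_toVal]

end Itp

section Reduction

variable {S' S : Set ℕ} (h : S' ⊆ S) (Γ : Set Fm)

theorem reduce_models_subset_models_cn_inter :
    reduce h (Models S Γ) ⊆ Models S' (Cn S Γ ∩ Lang S') := by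
  rintro _ ⟨ω, hω, rfl⟩ φ ⟨⟨-, hΓφ⟩, hφ⟩
  exact (ω.sat_restrict h hφ).mpr (hΓφ ω hω)

theorem models_cn_inter_subset_reduce_models (hS' : S'.Finite) :
    Models S' (Cn S Γ ∩ Lang S') ⊆ reduce h (Models S Γ) := by
  intro ω' hω'
  by_contra hω'_not_mem
  obtain ⟨χ, hχ, hχ_iff⟩ := Itp.exists_sat_iff_eq hS' ω'
  have hnegχ : Fm.neg χ ∈ Cn S Γ ∩ Lang S' := by
    refine ⟨⟨hχ.trans h, fun ω hω => (ω.sat_neg χ).mpr fun hχω => hω'_not_mem ⟨ω, hω, ?_⟩⟩, hχ⟩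
    exact (hχ_iff _).mp ((ω.sat_restrict h hχ).mpr hχω)
  exact (ω'.sat_neg χ).mp (hω' _ hnegχ) ((hχ_iff ω').mpr rfl)

end Reduction

theorem stmt0_general (S P : Set ℕ) (hS : S.Finite)
    (Γ : Set Fm) :
    Models (S \ P) (Forget S Γ P) = reduce Set.diff_subset (Models S Γ) :=
  (models_cn_inter_subset_reduce_models _ Γ (hS.subset Set.sdiff_subset)).antisymm
    (reduce_models_subset_models_cn_inter _ Γ)

theorem stmt0 (S P : Set ℕ) (hS : S.Finite) (hP : P ⊆ S)
    (Γ : Set Fm) (hΓfin : Γ.Finite) (hΓ : Γ ⊆ Lang S) :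
    Models (S \ P) (Forget S Γ P) = reduce Set.diff_subset (Models S Γ) :=
  stmt0_general S P hS Γ
end

section
/- For a set of propositional formulas Γ over Σ and P ⊆ Σ, the models over Σ of F(Γ,P) equal the expansion to Σ of the reduction to Σ\P of the models of Γ. -/
lemma Fm.eval_congr_s1 {v w : ℕ → Bool} : ∀ φ : Fm, (∀ n ∈ φ.atoms, v n = w n) →
    φ.eval v = φ.eval w
  | var n, h => h n rfl
  | top, _ => rfl
  | bot, _ => rfl
  | neg φ, h => by simp [Fm.eval, Fm.eval_congr_s1 φ h]
  | conj φ ψ, h => by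
      simp only [Fm.eval]
      rw [Fm.eval_congr_s1 φ (fun n hn => h n (Or.inl hn)),
        Fm.eval_congr_s1 ψ (fun n hn => h n (Or.inr hn))]
  | disj φ ψ, h => by
      simp only [Fm.eval]
      rw [Fm.eval_congr_s1 φ (fun n hn => h n (Or.inl hn)),
        Fm.eval_congr_s1 ψ (fun n hn => h n (Or.inr hn))]

def conjList : List Fm → Fm
  | [] => .top
  | φ :: l => .conj φ (conjList l)

def charList (f : ℕ → Bool) (l : List ℕ) : Fm :=
  conjList (l.map fun n => if f n then .var n else .neg (.var n))

lemma charList_atoms (f : ℕ → Bool) (l : List ℕ) :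
    (charList f l).atoms ⊆ {n | n ∈ l} := by
  induction l with
  | nil => simp [charList, conjList, Fm.atoms]
  | cons a l ih =>
    intro n hn
    simp only [charList, List.map_cons, conjList, Fm.atoms, Set.mem_union] at hn
    simp only [Set.mem_setOf_eq, List.mem_cons]
    rcases hn with hn | hn
    · left; split at hn <;> simp_all [Fm.atoms]
    · exact Or.inr (ih hn)

lemma charList_eval (f v : ℕ → Bool) (l : List ℕ) :
    (charList f l).eval v = true ↔ ∀ n ∈ l, v n = f n := by
  induction l with
  | nil => simp [charList, conjList, Fm.eval]
  | cons a l ih =>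
    simp only [charList, List.map_cons, conjList, Fm.eval, Bool.and_eq_true,
      List.mem_cons] at *
    constructor
    · rintro ⟨h1, h2⟩ n (rfl | hn)
      · split at h1 <;> simp_all [Fm.eval]
      · exact ih.mp h2 n hn
    · intro h
      refine ⟨?_, ih.mpr fun n hn => h n (Or.inr hn)⟩
      have := h a (Or.inl rfl)
      split <;> simp_all [Fm.eval]

lemma Itp.toVal_mem {S : Set ℕ} (ω : Itp S) {n : ℕ} (h : n ∈ S) :
    ω.toVal n = ω ⟨n, h⟩ := by simp [Itp.toVal, h]

theorem stmt1 (S P : Set ℕ) (hS : S.Finite) (hP : P ⊆ S)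
    (Γ : Set Fm) (hΓ : Γ ⊆ Lang S) :
    Models S (Forget S Γ P) =
      expand (Set.diff_subset : S \ P ⊆ S)
        (reduce (Set.diff_subset : S \ P ⊆ S) (Models S Γ)) := by
  have hfin : (S \ P).Finite := hS.subset Set.diff_subset
  ext ω
  simp only [expand, reduce, Set.mem_setOf_eq]
  constructor
  · intro hω
    by_contra hcon
    push_neg at hcon
    set l := hfin.toFinset.toList with hl
    have hmeml : ∀ n, n ∈ l ↔ n ∈ S \ P := by
      intro n; rw [Finset.mem_toList, Set.Finite.mem_toFinset]
    set χ := charList ω.toVal l with hχ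
    have hatoms : χ.atoms ⊆ S \ P := fun n hn => (hmeml n).mp (charList_atoms _ _ hn)
    have hforget : Fm.neg χ ∈ Forget S Γ P := by
      refine ⟨⟨fun n hn => Set.diff_subset (hatoms hn), ?_⟩,
        fun n hn => hatoms hn⟩
      intro μ hμ
      have hne : ¬ χ.eval μ.toVal = true := by
        intro heq
        apply hcon μ hμ
        have := (charList_eval _ _ _).mp heq
        funext n
        have hn := n.2
        have h1 := this n ((hmeml n).mpr hn)
        simp only [Itp.restrict]
        rw [← Itp.toVal_mem ω (Set.diff_subset hn), ← Itp.toVal_mem μ (Set.diff_subset hn), h1]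
      simp only [Itp.sat, Fm.eval]
      simpa using hne
    have := hω _ hforget
    have h2 : χ.eval ω.toVal = true := (charList_eval _ _ _).mpr fun n _ => rfl
    simp only [Itp.sat, Fm.eval, h2] at this
    simp at this
  · rintro ⟨μ, hμ, hrest⟩ φ ⟨⟨_, hcn⟩, hlang⟩
    have hsat := hcn μ hμ
    have hag : ∀ n ∈ φ.atoms, ω.toVal n = μ.toVal n := by
      intro n hn
      have hn' : n ∈ S \ P := hlang hn
      rw [Itp.toVal_mem ω (Set.diff_subset hn'), Itp.toVal_mem μ (Set.diff_subset hn')]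
      have := congrFun hrest ⟨n, hn'⟩
      simpa [Itp.restrict] using this.symm
    unfold Itp.sat at *
    rw [Fm.eval_congr_s1 φ hag]
    exact hsat
end

section
/- DFP-2: If Γ ⊨ Γ' then F(Γ,P) ⊨ F(Γ',P) for any signature P. -/
theorem stmt4 (S P : Set ℕ) (hS : S.Finite)
    (Γ Γ' : Set Fm) (hΓ : Γ ⊆ Lang S) (hΓ' : Γ' ⊆ Lang S)
    (h : Entails S Γ Γ') :
    Entails S (Forget S Γ P) (Forget S Γ' P) := by
  intro ω hω φ hφ
  exact hω φ ⟨⟨hφ.1.1, fun ω' hω' => hφ.1.2 ω' (h hω')⟩, hφ.2⟩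
end

section
/- DFP-6: Iterated forgetting implements simultaneous forgetting: F(Γ, P ∪ P') = F(F(Γ,P), P'). -/
lemma eval_agree (φ : Fm) (v w : ℕ → Bool) (h : ∀ n ∈ φ.atoms, v n = w n) :
    φ.eval v = φ.eval w := by
  induction φ with
  | var n => exact h n rfl
  | top => rfl
  | bot => rfl
  | neg φ ih => simp [Fm.eval, ih h]
  | conj φ ψ ih1 ih2 =>
      simp only [Fm.eval]
      rw [ih1 fun n hn => h n (Or.inl hn), ih2 fun n hn => h n (Or.inr hn)]
  | disj φ ψ ih1 ih2 =>
      simp only [Fm.eval]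
      rw [ih1 fun n hn => h n (Or.inl hn), ih2 fun n hn => h n (Or.inr hn)]

lemma restrict_toVal {S' S : Set ℕ} (h : S' ⊆ S) (ω : Itp S) {n : ℕ} (hn : n ∈ S') :
    (ω.restrict h).toVal n = ω.toVal n := by
  simp [Itp.toVal, Itp.restrict, hn, h hn]

lemma sat_restrict_iff {S' S : Set ℕ} (h : S' ⊆ S) (ω : Itp S) {φ : Fm}
    (hφ : φ ∈ Lang S') : (ω.restrict h).sat φ ↔ ω.sat φ := by
  unfold Itp.sat
  rw [eval_agree φ _ ω.toVal fun n hn => restrict_toVal h ω (hφ hn)]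

theorem stmt8 (S P P' : Set ℕ) (hS : S.Finite) (hP : P ⊆ S) (hP' : P' ⊆ S)
    (Γ : Set Fm) (hΓ : Γ ⊆ Lang S) :
    Forget S Γ (P ∪ P') = Forget (S \ P) (Forget S Γ P) P' := by
  have hsub : S \ P ⊆ S := Set.diff_subset
  have hlang : S \ (P ∪ P') = (S \ P) \ P' := (Set.diff_diff).symm
  ext φ
  constructor
  · rintro ⟨⟨hφL, hφ⟩, hφL'⟩
    refine ⟨⟨fun n hn => ⟨(hφL' hn).1, fun hp => (hφL' hn).2 (Or.inl hp)⟩, ?_⟩, hlang ▸ hφL'⟩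
    intro ω' hω'
    exact hω' φ ⟨⟨hφL, hφ⟩, fun n hn => ⟨(hφL' hn).1, fun hp => (hφL' hn).2 (Or.inl hp)⟩⟩
  · rintro ⟨⟨hφL, hφ⟩, hφL'⟩
    refine ⟨⟨fun n hn => hsub (hφL hn), ?_⟩, hlang ▸ hφL'⟩
    intro ω hω
    have hres : ω.restrict hsub ∈ Models (S \ P) (Forget S Γ P) := by
      intro ψ hψ
      exact (sat_restrict_iff hsub ω hψ.2).mpr (hψ.1.2 ω hω)
    exact (sat_restrict_iff hsub ω hφL).mp (hφ _ hres)
end
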